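/- arXiv:2105.02035 — 3 statements merged into one kernel-verified Lean document; each statement's English description precedes it below -/
import Mathlib

section
/- Let V₀, V₁ : X → [1, ∞) be functions and define the bivariate function V(θ₀, θ₁) := (V₀(θ₀) + V₁(θ₁))/2 on X × X. Suppose P is an operator on bounded measurable functions of X × X such that for functions of one coordinate, (P(V_j ∘ proj_j))(θ₀,θ₁) = (P_j V_j)(θ_j), where each marginal operator P_j satisfies the drift condition (P_j V_j)(θ) ≤ λ V_j(θ) + κ·1_{θ ∈ K} for some λ ∈ (0,1), κ ≥ 0, and set K ⊆ X. Further suppose V_j takes values in [1, Γ] with V_j = Γ on K^c, and that Λ := λ + κ/(1+Γ) < 1. Then for all (θ₀,θ₁) ∈ X × X: (i) if θ₀ ∉ K and θ₁ ∉ K, then (PV)(θ₀,θ₁) ≤ Λ V(θ₀,θ₁); (ii) if exactly one of θ₀, θ₁ lies in K, then (PV)(θ₀,θ₁) ≤ Λ V(θ₀,θ₁); (iii) if both θ₀, θ₁ ∈ K, then (PV)(θ₀,θ₁) ≤ Λ V(θ₀,θ₁) + κΓ/(1+Γ). In particular, P satisfies a drift condition with Lyapunov function V, small set K × K, drift constant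 Λ < 1, and additive constant κ̃ = κΓ/(1+Γ). -/
/-!
By linearity and the marginal property, `P V = (P₀ V₀ + P₁ V₁) / 2`, so the marginal drift
conditions give `P V ≤ λ V + κ (1_K(θ₀) + 1_K(θ₁)) / 2`. Off `K × K` at least one coordinate
sits where its Lyapunov function equals `Γ`, so `V ≥ (1 + Γ) / 2` whenever an additive `κ / 2`
occurs, and that term is absorbed into `κ / (1 + Γ) · V`. On `K × K` only
`κ / (1 + Γ) · V ≥ κ / (1 + Γ)` can be absorbed, which leaves `κ - κ / (1 + Γ) = κ Γ / (1 + Γ)`.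
-/

lemma half_le_div_mul_of_le {κ Γ v : ℝ} (hκ : 0 ≤ κ) (hΓ : 0 < 1 + Γ) (hv : (1 + Γ) / 2 ≤ v) :
    κ / 2 ≤ κ / (1 + Γ) * v := by
  rw [div_mul_eq_mul_div, div_le_div_iff₀ two_pos hΓ]
  nlinarith

lemma le_div_mul_add_of_one_le {κ Γ v : ℝ} (hκ : 0 ≤ κ) (hΓ : 0 < 1 + Γ) (hv : 1 ≤ v) :
    κ ≤ κ / (1 + Γ) * v + κ * Γ / (1 + Γ) := by
  rw [div_mul_eq_mul_div, ← add_div, le_div_iff₀ hΓ]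
  nlinarith

section CoupledDrift

open Classical

variable {X₀ X₁ : Type*} {P : (X₀ × X₁ → ℝ) → (X₀ × X₁ → ℝ)}
  {P₀ : (X₀ → ℝ) → (X₀ → ℝ)} {P₁ : (X₁ → ℝ) → (X₁ → ℝ)} {V₀ : X₀ → ℝ} {V₁ : X₁ → ℝ}
  {lam κ Γ : ℝ} {K₀ : Set X₀} {K₁ : Set X₁}

lemma coupled_drift_le (hP : IsLinearMap ℝ P)
    (hmarg₀ : ∀ θ : X₀ × X₁, P (fun p => V₀ p.1) θ = P₀ V₀ θ.1)
    (hmarg₁ : ∀ θ : X₀ × X₁, P (fun p => V₁ p.2) θ = P₁ V₁ θ.2)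
    (hdrift₀ : ∀ θ, P₀ V₀ θ ≤ lam * V₀ θ + κ * (if θ ∈ K₀ then 1 else 0))
    (hdrift₁ : ∀ θ, P₁ V₁ θ ≤ lam * V₁ θ + κ * (if θ ∈ K₁ then 1 else 0)) (θ : X₀ × X₁) :
    P (fun p => (V₀ p.1 + V₁ p.2) / 2) θ ≤ lam * ((V₀ θ.1 + V₁ θ.2) / 2)
      + κ * ((if θ.1 ∈ K₀ then 1 else 0) + (if θ.2 ∈ K₁ then 1 else 0)) / 2 := by
  have hV : (fun p : X₀ × X₁ => (V₀ p.1 + V₁ p.2) / 2)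
      = (1 / 2 : ℝ) • ((fun p => V₀ p.1) + fun p => V₁ p.2) := by
    ext p
    simp only [Pi.smul_apply, Pi.add_apply, smul_eq_mul]
    ring
  rw [hV, hP.map_smul, hP.map_add]
  simp only [Pi.smul_apply, Pi.add_apply, smul_eq_mul, hmarg₀, hmarg₁]
  linarith [hdrift₀ θ.1, hdrift₁ θ.2]

lemma coupled_drift (hP : IsLinearMap ℝ P)
    (hmarg₀ : ∀ θ : X₀ × X₁, P (fun p => V₀ p.1) θ = P₀ V₀ θ.1)
    (hmarg₁ : ∀ θ : X₀ × X₁, P (fun p => V₁ p.2) θ = P₁ V₁ θ.2)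
    (hdrift₀ : ∀ θ, P₀ V₀ θ ≤ lam * V₀ θ + κ * (if θ ∈ K₀ then 1 else 0))
    (hdrift₁ : ∀ θ, P₁ V₁ θ ≤ lam * V₁ θ + κ * (if θ ∈ K₁ then 1 else 0))
    (hV₀ : ∀ θ, 1 ≤ V₀ θ) (hV₁ : ∀ θ, 1 ≤ V₁ θ)
    (hV₀c : ∀ θ ∉ K₀, V₀ θ = Γ) (hV₁c : ∀ θ ∉ K₁, V₁ θ = Γ)
    (hκ : 0 ≤ κ) (hΓ : 0 < 1 + Γ) (θ : X₀ × X₁) :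
    P (fun p => (V₀ p.1 + V₁ p.2) / 2) θ
      ≤ (lam + κ / (1 + Γ)) * ((V₀ θ.1 + V₁ θ.2) / 2)
        + (κ * Γ / (1 + Γ)) * (if θ ∈ K₀ ×ˢ K₁ then 1 else 0) := by
  have hb := coupled_drift_le hP hmarg₀ hmarg₁ hdrift₀ hdrift₁ θ
  have h₀ := hV₀ θ.1
  have h₁ := hV₁ θ.2
  by_cases hθ₀ : θ.1 ∈ K₀ <;> by_cases hθ₁ : θ.2 ∈ K₁ <;>
    simp only [hθ₀, hθ₁, Set.mem_prod, and_self, and_true, and_false, if_true, if_false]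
      at hb ⊢
  · linarith [le_div_mul_add_of_one_le hκ hΓ (show 1 ≤ (V₀ θ.1 + V₁ θ.2) / 2 by linarith)]
  · have := hV₁c θ.2 hθ₁
    linarith [half_le_div_mul_of_le hκ hΓ (show (1 + Γ) / 2 ≤ (V₀ θ.1 + V₁ θ.2) / 2 by linarith)]
  · have := hV₀c θ.1 hθ₀
    linarith [half_le_div_mul_of_le hκ hΓ (show (1 + Γ) / 2 ≤ (V₀ θ.1 + V₁ θ.2) / 2 by linarith)]
  · have : 0 ≤ κ / (1 + Γ) * ((V₀ θ.1 + V₁ θ.2) / 2) := by positivity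
    linarith

end CoupledDrift

open Classical in

theorem coupled_drift_condition_general {X : Type*}
    (P : (X × X → ℝ) → (X × X → ℝ))
    (hPadd : ∀ f g : X × X → ℝ, P (f + g) = P f + P g)
    (hPsmul : ∀ (c : ℝ) (f : X × X → ℝ), P (c • f) = c • P f)
    (P₀ P₁ : (X → ℝ) → (X → ℝ))
    (V₀ V₁ : X → ℝ) (hV₀ : ∀ θ, 1 ≤ V₀ θ) (hV₁ : ∀ θ, 1 ≤ V₁ θ)
    (hmarg₀ : ∀ θ : X × X, P (fun p => V₀ p.1) θ = P₀ V₀ θ.1)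
    (hmarg₁ : ∀ θ : X × X, P (fun p => V₁ p.2) θ = P₁ V₁ θ.2)
    (lam κ Γ : ℝ) (hκ : 0 ≤ κ) (hΓ : 1 < Γ)
    (K : Set X)
    (hdrift₀ : ∀ θ, P₀ V₀ θ ≤ lam * V₀ θ + κ * (if θ ∈ K then 1 else 0))
    (hdrift₁ : ∀ θ, P₁ V₁ θ ≤ lam * V₁ θ + κ * (if θ ∈ K then 1 else 0))
    (hV₀c : ∀ θ ∉ K, V₀ θ = Γ) (hV₁c : ∀ θ ∉ K, V₁ θ = Γ) :
    (∀ θ : X × X, θ.1 ∉ K → θ.2 ∉ K →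
        P (fun p => (V₀ p.1 + V₁ p.2) / 2) θ
          ≤ (lam + κ / (1 + Γ)) * ((V₀ θ.1 + V₁ θ.2) / 2)) ∧
    (∀ θ : X × X, (θ.1 ∈ K ∧ θ.2 ∉ K) ∨ (θ.1 ∉ K ∧ θ.2 ∈ K) →
        P (fun p => (V₀ p.1 + V₁ p.2) / 2) θ
          ≤ (lam + κ / (1 + Γ)) * ((V₀ θ.1 + V₁ θ.2) / 2)) ∧
    (∀ θ : X × X, θ.1 ∈ K → θ.2 ∈ K →
        P (fun p => (V₀ p.1 + V₁ p.2) / 2) θ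
          ≤ (lam + κ / (1 + Γ)) * ((V₀ θ.1 + V₁ θ.2) / 2) + κ * Γ / (1 + Γ)) ∧
    (∀ θ : X × X,
        P (fun p => (V₀ p.1 + V₁ p.2) / 2) θ
          ≤ (lam + κ / (1 + Γ)) * ((V₀ θ.1 + V₁ θ.2) / 2)
            + (κ * Γ / (1 + Γ)) * (if θ ∈ K ×ˢ K then 1 else 0)) := by
  have h := coupled_drift ⟨hPadd, hPsmul⟩ hmarg₀ hmarg₁ hdrift₀ hdrift₁ hV₀ hV₁ hV₀c hV₁c hκ
    (by linarith)
  refine ⟨fun θ h₀ h₁ => ?_, ?_, fun θ h₀ h₁ => ?_, h⟩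
  · simpa [h₀, h₁] using h θ
  · rintro θ (⟨h₀, h₁⟩ | ⟨h₀, h₁⟩) <;> simpa [h₀, h₁] using h θ
  · simpa [h₀, h₁] using h θ

open Classical in
/-- Drift condition for the coupled chain, from drift conditions for the marginals.
`P` is a linear, positivity-preserving (Markov) operator on functions of `X × X`
which respects the marginals: on functions of one coordinate it acts as the marginal
operator `P_j`. -/
theorem coupled_drift_condition {X : Type*}
    (P : (X × X → ℝ) → (X × X → ℝ))
    (hPadd : ∀ f g : X × X → ℝ, P (f + g) = P f + P g)
    (hPsmul : ∀ (c : ℝ) (f : X × X → ℝ), P (c • f) = c • P f)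
    (P₀ P₁ : (X → ℝ) → (X → ℝ))
    (V₀ V₁ : X → ℝ) (hV₀ : ∀ θ, 1 ≤ V₀ θ) (hV₁ : ∀ θ, 1 ≤ V₁ θ)
    (hmarg₀ : ∀ θ : X × X, P (fun p => V₀ p.1) θ = P₀ V₀ θ.1)
    (hmarg₁ : ∀ θ : X × X, P (fun p => V₁ p.2) θ = P₁ V₁ θ.2)
    (lam κ Γ : ℝ) (hlam : lam ∈ Set.Ioo (0:ℝ) 1) (hκ : 0 ≤ κ) (hΓ : 1 < Γ)
    (K : Set X)
    (hdrift₀ : ∀ θ, P₀ V₀ θ ≤ lam * V₀ θ + κ * (if θ ∈ K then 1 else 0))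
    (hdrift₁ : ∀ θ, P₁ V₁ θ ≤ lam * V₁ θ + κ * (if θ ∈ K then 1 else 0))
    (hV₀Γ : ∀ θ, V₀ θ ≤ Γ) (hV₁Γ : ∀ θ, V₁ θ ≤ Γ)
    (hV₀c : ∀ θ ∉ K, V₀ θ = Γ) (hV₁c : ∀ θ ∉ K, V₁ θ = Γ)
    (hΛ : lam + κ / (1 + Γ) < 1) :
    (∀ θ : X × X, θ.1 ∉ K → θ.2 ∉ K →
        P (fun p => (V₀ p.1 + V₁ p.2) / 2) θ
          ≤ (lam + κ / (1 + Γ)) * ((V₀ θ.1 + V₁ θ.2) / 2)) ∧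
    (∀ θ : X × X, (θ.1 ∈ K ∧ θ.2 ∉ K) ∨ (θ.1 ∉ K ∧ θ.2 ∈ K) →
        P (fun p => (V₀ p.1 + V₁ p.2) / 2) θ
          ≤ (lam + κ / (1 + Γ)) * ((V₀ θ.1 + V₁ θ.2) / 2)) ∧
    (∀ θ : X × X, θ.1 ∈ K → θ.2 ∈ K →
        P (fun p => (V₀ p.1 + V₁ p.2) / 2) θ
          ≤ (lam + κ / (1 + Γ)) * ((V₀ θ.1 + V₁ θ.2) / 2) + κ * Γ / (1 + Γ)) ∧
    (∀ θ : X × X,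
        P (fun p => (V₀ p.1 + V₁ p.2) / 2) θ
          ≤ (lam + κ / (1 + Γ)) * ((V₀ θ.1 + V₁ θ.2) / 2)
            + (κ * Γ / (1 + Γ)) * (if θ ∈ K ×ˢ K then 1 else 0)) :=
  coupled_drift_condition_general P hPadd hPsmul P₀ P₁ V₀ V₁ hV₀ hV₁ hmarg₀ hmarg₁ lam κ Γ hκ hΓ K
    hdrift₀ hdrift₁ hV₀c hV₁c
end

section
/- Let (X, ℬ, μ) be a probability space, Q, π : X → (0,∞) measurable probability densities with respect to μ, and ε > 0. Suppose A ⊆ X is measurable with ∫_A Q dμ > 1 - ε and ∫_A 1 dμ arbitrary, and suppose Q(θ)/π(θ) > Q(z)/π(z) for all θ ∈ A^c and z ∈ A. Define the Independence Metropolis–Hastings kernel p(θ, B) := ∫_B α(θ,z) Q(z) dμ(z) + 1_{θ ∈ B}(1 - ∫_X α(θ,z) Q(z) dμ(z)) where α(θ,z) = min(1, Q(θ)π(z)/(Q(z)π(θ))). Then p(θ, A^c) ≤ 2ε for every θ ∈ X. -/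
/-! Proposals are drawn from `Q`, so the move part of `p(θ, Aᶜ)` is at most `Q(Aᶜ) < ε`.
The rejection mass only matters when `θ ∉ A`, and then every proposal into `A` has
acceptance probability one because `Q/π` is larger at `θ`; hence the rejection mass is at
most `1 - Q(A) = Q(Aᶜ) < ε` as well. -/

open MeasureTheory

noncomputable section

variable {X : Type*}

def imhAcceptance (Q π : X → ℝ) (θ z : X) : ℝ :=
  min 1 ((Q θ * π z) / (Q z * π θ))

variable {Q π : X → ℝ}

lemma imhAcceptance_nonneg (hQpos : ∀ z, 0 < Q z) (hπpos : ∀ z, 0 < π z) (θ z : X) :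
    0 ≤ imhAcceptance Q π θ z :=
  le_min zero_le_one <| div_nonneg (mul_pos (hQpos θ) (hπpos z)).le
    (mul_pos (hQpos z) (hπpos θ)).le

lemma imhAcceptance_eq_one_of_ratio_le (hQpos : ∀ z, 0 < Q z) (hπpos : ∀ z, 0 < π z)
    {θ z : X} (h : Q z / π z ≤ Q θ / π θ) : imhAcceptance Q π θ z = 1 := by
  have hratio : Q θ * π z / (Q z * π θ) = (Q θ / π θ) / (Q z / π z) := by
    have := hπpos θ; have := hπpos z; have := hQpos z
    field_simp
  rw [imhAcceptance, min_eq_left]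
  rwa [hratio, one_le_div (div_pos (hQpos z) (hπpos z))]

lemma imhAcceptance_mul_le (θ z : X) (hQ : 0 ≤ Q z) :
    imhAcceptance Q π θ z * Q z ≤ Q z :=
  mul_le_of_le_one_left hQ (min_le_left _ _)

variable [MeasurableSpace X] {μ : Measure X}

lemma integrable_imhAcceptance_mul (hQpos : ∀ z, 0 < Q z) (hπpos : ∀ z, 0 < π z)
    (hQi : Integrable Q μ) (hπmeas : Measurable π) (θ : X) :
    Integrable (fun z => imhAcceptance Q π θ z * Q z) μ := by
  have hQmeas : AEMeasurable Q μ := hQi.aemeasurable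
  refine hQi.mono' (AEMeasurable.aestronglyMeasurable ?_) (.of_forall fun z => ?_)
  · unfold imhAcceptance
    fun_prop
  · rw [Real.norm_of_nonneg (mul_nonneg (imhAcceptance_nonneg hQpos hπpos θ z) (hQpos z).le)]
    exact imhAcceptance_mul_le θ z (hQpos z).le

lemma one_sub_integral_imhAcceptance_mul_le (hQpos : ∀ z, 0 < Q z) (hπpos : ∀ z, 0 < π z)
    (hQi : Integrable Q μ) (hQint : ∫ z, Q z ∂μ = 1) (hπmeas : Measurable π)
    {A : Set X} (hA : MeasurableSet A) {θ : X} (hθ : ∀ z ∈ A, Q z / π z ≤ Q θ / π θ) :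
    1 - ∫ z, imhAcceptance Q π θ z * Q z ∂μ ≤ ∫ z in Aᶜ, Q z ∂μ := by
  have hacceptA : ∫ z in A, imhAcceptance Q π θ z * Q z ∂μ = ∫ z in A, Q z ∂μ :=
    setIntegral_congr_fun hA fun z hz => by
      simp only [imhAcceptance_eq_one_of_ratio_le hQpos hπpos (hθ z hz), one_mul]
  have hsetle : ∫ z in A, imhAcceptance Q π θ z * Q z ∂μ ≤ ∫ z, imhAcceptance Q π θ z * Q z ∂μ :=
    setIntegral_le_integral (integrable_imhAcceptance_mul hQpos hπpos hQi hπmeas θ)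
      (.of_forall fun z => mul_nonneg (imhAcceptance_nonneg hQpos hπpos θ z) (hQpos z).le)
  have hsplit := integral_add_compl hA hQi
  linarith

lemma imh_kernel_compl_le (hQpos : ∀ z, 0 < Q z) (hπpos : ∀ z, 0 < π z)
    (hQi : Integrable Q μ) (hQint : ∫ z, Q z ∂μ = 1) (hπmeas : Measurable π)
    {A : Set X} (hA : MeasurableSet A) (hratio : ∀ θ ∉ A, ∀ z ∈ A, Q z / π z ≤ Q θ / π θ)
    (θ : X) :
    (∫ z in Aᶜ, imhAcceptance Q π θ z * Q z ∂μ)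
        + Aᶜ.indicator (fun _ => 1 - ∫ z, imhAcceptance Q π θ z * Q z ∂μ) θ
      ≤ 2 * ∫ z in Aᶜ, Q z ∂μ := by
  have hQcompl_nonneg : 0 ≤ ∫ z in Aᶜ, Q z ∂μ :=
    setIntegral_nonneg hA.compl fun z _ => (hQpos z).le
  have hmove : ∫ z in Aᶜ, imhAcceptance Q π θ z * Q z ∂μ ≤ ∫ z in Aᶜ, Q z ∂μ :=
    integral_mono_of_nonneg
      (.of_forall fun z => mul_nonneg (imhAcceptance_nonneg hQpos hπpos θ z) (hQpos z).le)
      hQi.integrableOn (.of_forall fun z => imhAcceptance_mul_le θ z (hQpos z).le)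
  have hreject : Aᶜ.indicator (fun _ => 1 - ∫ z, imhAcceptance Q π θ z * Q z ∂μ) θ
      ≤ ∫ z in Aᶜ, Q z ∂μ := by
    by_cases hθ : θ ∈ A
    · rwa [Set.indicator_of_notMem (Set.notMem_compl_iff.mpr hθ)]
    · rw [Set.indicator_of_mem (Set.mem_compl hθ)]
      exact one_sub_integral_imhAcceptance_mul_le hQpos hπpos hQi hQint hπmeas hA
        (hratio θ hθ)
  linarith

end

theorem imh_kernel_tail_bound_general {X : Type*} [MeasurableSpace X]
    (μ : Measure X)
    (Q π : X → ℝ) (hπmeas : Measurable π)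
    (hQpos : ∀ z, 0 < Q z) (hπpos : ∀ z, 0 < π z)
    (hQint : ∫ z, Q z ∂μ = 1)
    (ε : ℝ)
    (A : Set X) (hA : MeasurableSet A)
    (hAmass : 1 - ε < ∫ z in A, Q z ∂μ)
    (hratio : ∀ θ ∉ A, ∀ z ∈ A, Q z / π z < Q θ / π θ) :
    ∀ θ : X,
      (∫ z in Aᶜ, min 1 ((Q θ * π z) / (Q z * π θ)) * Q z ∂μ)
        + Set.indicator Aᶜ
            (fun _ => 1 - ∫ z, min 1 ((Q θ * π z) / (Q z * π θ)) * Q z ∂μ) θ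
      ≤ 2 * ε := by
  intro θ
  have hQi : Integrable Q μ := .of_integral_ne_zero (by simp [hQint])
  have hQcompl : ∫ z in Aᶜ, Q z ∂μ < ε := by
    linarith [integral_add_compl hA hQi]
  have hkernel := imh_kernel_compl_le hQpos hπpos hQi hQint hπmeas hA
    (fun θ hθ z hz => (hratio θ hθ z hz).le) θ
  exact hkernel.trans (by linarith)

/-- Uniform tightness estimate for the Independence Metropolis–Hastings kernel:
if `A` carries `Q`-mass at least `1-ε` and the ratio `Q/π` is larger outside `A`
than inside, then `p(θ, Aᶜ) ≤ 2ε` uniformly in `θ`. -/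
theorem imh_kernel_tail_bound {X : Type*} [MeasurableSpace X]
    (μ : Measure X) [IsProbabilityMeasure μ]
    (Q π : X → ℝ) (hQmeas : Measurable Q) (hπmeas : Measurable π)
    (hQpos : ∀ z, 0 < Q z) (hπpos : ∀ z, 0 < π z)
    (hQint : ∫ z, Q z ∂μ = 1) (hπint : ∫ z, π z ∂μ = 1)
    (ε : ℝ) (hε : 0 < ε)
    (A : Set X) (hA : MeasurableSet A)
    (hAmass : 1 - ε < ∫ z in A, Q z ∂μ)
    (hratio : ∀ θ ∉ A, ∀ z ∈ A, Q z / π z < Q θ / π θ) :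
    ∀ θ : X,
      (∫ z in Aᶜ, min 1 ((Q θ * π z) / (Q z * π θ)) * Q z ∂μ)
        + Set.indicator Aᶜ
            (fun _ => 1 - ∫ z, min 1 ((Q θ * π z) / (Q z * π θ)) * Q z ∂μ) θ
      ≤ 2 * ε :=
  imh_kernel_tail_bound_general μ Q π hπmeas hQpos hπpos hQint ε A hA hAmass hratio
end

section
/- Let P be a Markov operator on L_2(X, μ) with invariant probability measure μ and adjoint P*. Suppose the pseudo-spectral gap γ_ps := max_{k ≥ 1} γ₂[(P*)^k P^k]/k is positive, where γ₂[R] := 1 − ‖R‖_{L₂⁰ → L₂⁰} and L₂⁰ is the subspace of mean-zero functions. Then for every g ∈ L₂⁰(X, μ) and every n, m ≥ 0, |⟨P^n g, P^m g⟩_{L₂(μ)}| ≤ ‖g‖²_{L₂(μ)}, and for the chain started in stationarity, the variance of the ergodic average satisfies E_μ |(1/N) Σ_{i=1}^N g(θ_i)|² ≤ (1 + 4/γ_ps) · ‖g‖²_{L₂(μ)} / N. -/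
/-!
By the C⋆-identity `‖(P⋆)^k P^k‖ = ‖P^k‖²`, a gap term `(1 - ‖(P⋆)^k P^k‖)/k > c` forces
`1 - ‖P^k‖ ≥ (1 - ‖P^k‖²)/2 > ck/2`. Since `‖P^j‖ ≤ ‖P^k‖^⌊j/k⌋`, the norms of the powers decay
geometrically in blocks of length `k`, so `∑_{j<N} ‖P^j‖ ≤ 2/c`, and letting `c ↑ γ_ps` gives
`2/γ_ps`. Bounding `⟪P^|n-m| g, g⟫ ≤ ‖P^|n-m| g‖ ‖g‖`, every row of the Toeplitz double sum is at
most `2 ∑_{j<N} ‖P^j g‖ ‖g‖ - ‖g‖² ≤ (4/γ_ps - 1) ‖g‖²`.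
-/

open scoped RealInnerProductSpace
open Finset

theorem sum_range_mul_pow_div (t : ℝ) {k : ℕ} (hk : 0 < k) (N : ℕ) :
    ∑ j ∈ range (k * N), t ^ (j / k) = k * ∑ q ∈ range N, t ^ q := by
  induction N with
  | zero => simp
  | succ N ih =>
    have hblock : ∀ i ∈ range k, t ^ ((k * N + i) / k) = t ^ N := fun i hi => by
      rw [Nat.mul_add_div hk, Nat.div_eq_of_lt (mem_range.mp hi), add_zero]
    rw [Nat.mul_succ, sum_range_add, ih, sum_congr rfl hblock, sum_range_succ]
    simp [mul_add]

theorem sum_range_pow_div_le {t : ℝ} (ht₀ : 0 ≤ t) (ht₁ : t < 1) {k : ℕ} (hk : 0 < k)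
    (N : ℕ) : ∑ j ∈ range N, t ^ (j / k) ≤ k / (1 - t) :=
  calc ∑ j ∈ range N, t ^ (j / k)
      ≤ ∑ j ∈ range (k * N), t ^ (j / k) :=
        sum_le_sum_of_subset_of_nonneg (range_subset_range.mpr (Nat.le_mul_of_pos_left N hk))
          fun j _ _ => pow_nonneg ht₀ _
    _ = k * ∑ q ∈ range N, t ^ q := sum_range_mul_pow_div t hk N
    _ ≤ k * (1 / (1 - t)) := by
        gcongr
        simpa using geom_sum_Ico_le_of_lt_one (m := 0) (n := N) ht₀ ht₁
    _ = k / (1 - t) := mul_one_div _ _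

theorem sum_range_natAbs_sub_le {f : ℕ → ℝ} (hf : ∀ j, 0 ≤ f j) {n N : ℕ} (hn : n < N) :
    ∑ m ∈ range N, f (n - m : ℤ).natAbs ≤ 2 * ∑ j ∈ range N, f j - f 0 := by
  have hpast : ∑ m ∈ range (n + 1), f (n - m : ℤ).natAbs ≤ ∑ j ∈ range N, f j :=
    calc ∑ m ∈ range (n + 1), f (n - m : ℤ).natAbs
        = ∑ m ∈ range (n + 1), f (n - m) :=
          sum_congr rfl fun m hm => by
            rw [Int.natAbs_natCast_sub_natCast_of_ge (Nat.lt_succ_iff.mp (mem_range.mp hm))]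
      _ = ∑ j ∈ range (n + 1), f j := sum_range_reflect f (n + 1)
      _ ≤ ∑ j ∈ range N, f j :=
          sum_le_sum_of_subset_of_nonneg (range_subset_range.mpr hn) fun j _ _ => hf j
  have hfuture : ∑ m ∈ Ico (n + 1) N, f (n - m : ℤ).natAbs ≤ ∑ j ∈ range N, f j - f 0 :=
    calc ∑ m ∈ Ico (n + 1) N, f (n - m : ℤ).natAbs
        = ∑ i ∈ range (N - (n + 1)), f (i + 1) := by
          rw [sum_Ico_eq_sum_range]
          exact sum_congr rfl fun i _ => congrArg f (by omega)
      _ = ∑ j ∈ range (N - n), f j - f 0 := by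
          rw [show N - n = N - (n + 1) + 1 by omega, sum_range_succ']
          ring
      _ ≤ ∑ j ∈ range N, f j - f 0 :=
          sub_le_sub_right (sum_le_sum_of_subset_of_nonneg
            (range_subset_range.mpr (Nat.sub_le N n)) fun j _ _ => hf j) _
  rw [← sum_range_add_sum_Ico _ hn]
  linarith

theorem sum_sum_natAbs_sub_le {f : ℕ → ℝ} (hf : ∀ j, 0 ≤ f j) (N : ℕ) :
    ∑ n ∈ range N, ∑ m ∈ range N, f (n - m : ℤ).natAbs ≤
      N * (2 * ∑ j ∈ range N, f j - f 0) :=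
  calc ∑ n ∈ range N, ∑ m ∈ range N, f (n - m : ℤ).natAbs
      ≤ ∑ _n ∈ range N, (2 * ∑ j ∈ range N, f j - f 0) :=
        sum_le_sum fun _n hn => sum_range_natAbs_sub_le hf (mem_range.mp hn)
    _ = N * (2 * ∑ j ∈ range N, f j - f 0) := by rw [sum_const, card_range, nsmul_eq_mul]

theorem ContinuousLinearMap.norm_pow_le_one {𝕜 E : Type*} [NontriviallyNormedField 𝕜]
    [SeminormedAddCommGroup E] [NormedSpace 𝕜 E] {T : E →L[𝕜] E} (hT : ‖T‖ ≤ 1) (n : ℕ) :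
    ‖T ^ n‖ ≤ 1 := by
  rcases n.eq_zero_or_pos with rfl | hn
  · exact norm_id_le
  · exact (norm_pow_le' T hn).trans (pow_le_one₀ (norm_nonneg T) hT)

section PowerBounded

variable {A : Type*} [NormedRing A] {a : A}

theorem norm_pow_le_norm_pow_pow_div (ha : ∀ n, ‖a ^ n‖ ≤ 1) (j k : ℕ) :
    ‖a ^ j‖ ≤ ‖a ^ k‖ ^ (j / k) := by
  have hsplit : a ^ j = (a ^ k) ^ (j / k) * a ^ (j % k) := by
    rw [← pow_mul, ← pow_add, Nat.div_add_mod]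
  have hblocks : ‖(a ^ k) ^ (j / k)‖ ≤ ‖a ^ k‖ ^ (j / k) := by
    rcases (j / k).eq_zero_or_pos with hq | hq
    · simpa [hq] using ha 0
    · exact norm_pow_le' _ hq
  calc ‖a ^ j‖ ≤ ‖(a ^ k) ^ (j / k)‖ * ‖a ^ (j % k)‖ := hsplit ▸ norm_mul_le _ _
    _ ≤ ‖a ^ k‖ ^ (j / k) * 1 := by gcongr; exact ha _
    _ = ‖a ^ k‖ ^ (j / k) := mul_one _

theorem sum_norm_pow_le (ha : ∀ n, ‖a ^ n‖ ≤ 1) {k : ℕ} (hk : 0 < k) (hak : ‖a ^ k‖ < 1)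
    (N : ℕ) : ∑ j ∈ range N, ‖a ^ j‖ ≤ k / (1 - ‖a ^ k‖) :=
  (sum_le_sum fun j _ => norm_pow_le_norm_pow_pow_div ha j k).trans
    (sum_range_pow_div_le (norm_nonneg _) hak hk N)

end PowerBounded

section PseudoSpectralGap

variable {A : Type*} [NormedRing A] [StarRing A]

noncomputable def pseudoSpectralGap (a : A) : ℝ :=
  ⨆ k : ℕ+, (1 - ‖star a ^ (k : ℕ) * a ^ (k : ℕ)‖) / k

theorem bddAbove_range_pseudoSpectralGap (a : A) :
    BddAbove (Set.range fun k : ℕ+ => (1 - ‖star a ^ (k : ℕ) * a ^ (k : ℕ)‖) / k) := by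
  refine ⟨1, ?_⟩
  rintro _ ⟨k, rfl⟩
  have hk : (1 : ℝ) ≤ k := Nat.one_le_cast.mpr k.pos
  rw [div_le_one (by positivity)]
  linarith [norm_nonneg (star a ^ (k : ℕ) * a ^ (k : ℕ))]

variable [CStarRing A] {a : A}

theorem sum_norm_pow_le_of_lt_gap (ha : ∀ n, ‖a ^ n‖ ≤ 1) {c : ℝ} (hc : 0 < c) {k : ℕ}
    (hk : 0 < k) (hck : c < (1 - ‖star a ^ k * a ^ k‖) / k) (N : ℕ) :
    ∑ j ∈ range N, ‖a ^ j‖ ≤ 2 / c := by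
  have hkR : (0 : ℝ) < k := mod_cast hk
  set t := ‖a ^ k‖
  have hstar : ‖star a ^ k * a ^ k‖ = t * t := by
    rw [← star_pow]; exact CStarRing.norm_star_mul_self
  rw [hstar, lt_div_iff₀ hkR] at hck
  have ht₀ : 0 ≤ t := norm_nonneg _
  have ht₁ : t ≤ 1 := ha k
  have hgap : c * k / 2 < 1 - t := by nlinarith
  have ht : t < 1 := by linarith [mul_pos hc hkR]
  calc ∑ j ∈ range N, ‖a ^ j‖ ≤ k / (1 - t) := sum_norm_pow_le ha hk ht N
    _ ≤ k / (c * k / 2) := by gcongr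
    _ = 2 / c := by field_simp

theorem sum_norm_pow_le_two_div_pseudoSpectralGap (ha : ∀ n, ‖a ^ n‖ ≤ 1)
    (hγ : 0 < pseudoSpectralGap a) (N : ℕ) :
    ∑ j ∈ range N, ‖a ^ j‖ ≤ 2 / pseudoSpectralGap a := by
  set S := ∑ j ∈ range N, ‖a ^ j‖
  by_contra! hS
  have hS₀ : 0 < S := (by positivity : (0 : ℝ) < 2 / pseudoSpectralGap a).trans hS
  have h2S : 2 / S < pseudoSpectralGap a := by
    rw [div_lt_iff₀ hS₀]; rw [div_lt_iff₀ hγ] at hS; linarith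
  obtain ⟨c, hSc, hcγ⟩ := exists_between h2S
  have hc : 0 < c := (by positivity : (0 : ℝ) < 2 / S).trans hSc
  obtain ⟨k, hk⟩ := (lt_ciSup_iff (bddAbove_range_pseudoSpectralGap a)).mp hcγ
  have hSle : S ≤ 2 / c := sum_norm_pow_le_of_lt_gap ha hc k.pos hk N
  rw [div_lt_iff₀ hS₀] at hSc
  rw [le_div_iff₀ hc] at hSle
  linarith

end PseudoSpectralGap

theorem sum_sum_inner_pow_natAbs_sub_le {E : Type*} [NormedAddCommGroup E]
    [InnerProductSpace ℝ E] (T : E →L[ℝ] E) (g : E) {N : ℕ} {B : ℝ}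
    (hB : ∑ j ∈ range N, ‖T ^ j‖ ≤ B) :
    ∑ n ∈ range N, ∑ m ∈ range N, ⟪(T ^ (n - m : ℤ).natAbs) g, g⟫ ≤
      N * ((2 * B - 1) * ‖g‖ ^ 2) := by
  let f : ℕ → ℝ := fun j => ‖(T ^ j) g‖ * ‖g‖
  have hf0 : f 0 = ‖g‖ ^ 2 := by simp [f, sq]
  have hsum : ∑ j ∈ range N, f j ≤ B * ‖g‖ ^ 2 :=
    calc ∑ j ∈ range N, f j ≤ ∑ j ∈ range N, ‖T ^ j‖ * ‖g‖ ^ 2 :=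
          sum_le_sum fun j _ => by
            show ‖(T ^ j) g‖ * ‖g‖ ≤ ‖T ^ j‖ * ‖g‖ ^ 2
            rw [sq, ← mul_assoc]; gcongr; exact (T ^ j).le_opNorm g
      _ = (∑ j ∈ range N, ‖T ^ j‖) * ‖g‖ ^ 2 := (sum_mul _ _ _).symm
      _ ≤ B * ‖g‖ ^ 2 := by gcongr
  calc ∑ n ∈ range N, ∑ m ∈ range N, ⟪(T ^ (n - m : ℤ).natAbs) g, g⟫
      ≤ ∑ n ∈ range N, ∑ m ∈ range N, f (n - m : ℤ).natAbs := by
        gcongr; exact real_inner_le_norm _ _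
    _ ≤ N * (2 * ∑ j ∈ range N, f j - f 0) :=
        sum_sum_natAbs_sub_le (fun j => mul_nonneg (norm_nonneg ((T ^ j) g)) (norm_nonneg g)) N
    _ ≤ N * ((2 * B - 1) * ‖g‖ ^ 2) := by
        gcongr
        linarith

/-- Stationary-variance (pseudo-spectral gap) bound. Here `H` plays the role of the
mean-zero subspace `L₂⁰(X, μ)`, `P` is the Markov operator restricted to `H` (a weak
contraction), and the pseudo-spectral gap is
`γ_ps = sup_{k ≥ 1} (1 − ‖(P*)^k P^k‖)/k`. In stationarity the covariance of
`g(θ_n)` and `g(θ_m)` equals `⟪P^{|n−m|} g, g⟫`, so the variance of the ergodic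
average `(1/N) Σ g(θ_i)` is the displayed double sum; it is bounded by
`(1 + 4/γ_ps)·‖g‖²/N`. -/
theorem pseudo_spectral_gap_variance_bound {H : Type*} [NormedAddCommGroup H]
    [InnerProductSpace ℝ H] [CompleteSpace H]
    (P : H →L[ℝ] H) (hP : ‖P‖ ≤ 1)
    (γps : ℝ) (hγpos : 0 < γps)
    (hγ : γps = ⨆ k : ℕ+, (1 - ‖(ContinuousLinearMap.adjoint P) ^ (k : ℕ) * P ^ (k : ℕ)‖) / (k : ℝ)) :
    (∀ (g : H) (n m : ℕ), |⟪(P ^ n) g, (P ^ m) g⟫| ≤ ‖g‖ ^ 2) ∧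
    (∀ (g : H) (N : ℕ), 1 ≤ N →
      (1 / (N : ℝ) ^ 2) * ∑ n ∈ range N, ∑ m ∈ range N,
          ⟪(P ^ (Int.natAbs ((n : ℤ) - (m : ℤ)))) g, g⟫
        ≤ (1 + 4 / γps) * ‖g‖ ^ 2 / N) := by
  have hpow := ContinuousLinearMap.norm_pow_le_one hP
  have hcontr (n : ℕ) (g : H) : ‖(P ^ n) g‖ ≤ ‖g‖ := by
    simpa using (P ^ n).le_of_opNorm_le (hpow n) g
  have hgap : γps = pseudoSpectralGap P := by
    simpa only [pseudoSpectralGap, ContinuousLinearMap.star_eq_adjoint] using hγ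
  refine ⟨fun g n m => ?_, fun g N _ => ?_⟩
  · calc |⟪(P ^ n) g, (P ^ m) g⟫| ≤ ‖(P ^ n) g‖ * ‖(P ^ m) g‖ := abs_real_inner_le_norm _ _
      _ ≤ ‖g‖ * ‖g‖ := by gcongr <;> exact hcontr _ g
      _ = ‖g‖ ^ 2 := (sq _).symm
  have hsum : ∑ j ∈ range N, ‖P ^ j‖ ≤ 2 / γps :=
    hgap ▸ sum_norm_pow_le_two_div_pseudoSpectralGap hpow (hgap ▸ hγpos) N
  calc (1 / (N : ℝ) ^ 2) * ∑ n ∈ range N, ∑ m ∈ range N, ⟪(P ^ (n - m : ℤ).natAbs) g, g⟫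
      ≤ (1 / (N : ℝ) ^ 2) * (N * ((2 * (2 / γps) - 1) * ‖g‖ ^ 2)) := by
        gcongr; exact sum_sum_inner_pow_natAbs_sub_le P g hsum
    _ ≤ (1 / (N : ℝ) ^ 2) * (N * ((1 + 4 / γps) * ‖g‖ ^ 2)) := by
        gcongr; linarith [show 2 * (2 / γps) = 4 / γps by ring]
    _ = (1 + 4 / γps) * ‖g‖ ^ 2 / N := by field_simp
end
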